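/- Let {(f_i, A_i) : i ∈ I} be a family of central soft sets over a common universe U. Define h : E → P(U) by h(e) = ⋃_{i ∈ I_e} f_i(e) if I_e ≠ ∅ and h(e) = ⋃_{i ∈ I} f_i(e) otherwise, where I_e = {i ∈ I : e ∈ A_i}. Then (h, ⋃_{i ∈ I} A_i) is an upper bound of the family in the central soft information order: (f_j, A_j) ⊑ (h, ⋃_{i ∈ I} A_i) for every j ∈ I. -/

import Mathlib

open Classical

/-- A central soft set over a universe `U` with parameter set `E`:
a mapping `f : E → Set U` together with a central set `A ⊆ E`. -/
structure CSS (E U : Type*) where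
  f : E → Set U
  A : Set E

/-- Union of central soft sets. -/
noncomputable def cssUnion {E U : Type*} (s t : CSS E U) : CSS E U where
  f := fun e =>
    if e ∈ s.A \ t.A then s.f e
    else if e ∈ t.A \ s.A then t.f e
    else s.f e ∪ t.f e
  A := s.A ∪ t.A

/-- Intersection of central soft sets. -/
noncomputable def cssInter {E U : Type*} (s t : CSS E U) : CSS E U where
  f := fun e =>
    if e ∈ s.A \ t.A then t.f e
    else if e ∈ t.A \ s.A then s.f e
    else s.f e ∩ t.f e
  A := s.A ∩ t.A

/-- Complement of a central soft set. -/
def cssCompl {E U : Type*} (s : CSS E U) : CSS E U where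
  f := fun e => (s.f e)ᶜ
  A := s.Aᶜ

/-- Difference of central soft sets: `s − t = s ⊓ tᶜ`. -/
noncomputable def cssDiff {E U : Type*} (s t : CSS E U) : CSS E U :=
  cssInter s (cssCompl t)

/-- The central soft information order: `s ⊑ t` iff `s ⊔ t = t`. -/
def cssLE {E U : Type*} (s t : CSS E U) : Prop := cssUnion s t = t

/-- Projection of a central soft set over a set `B` of parameters
(the mapping is unchanged, the central set becomes `B`). -/
def cssProj {E U : Type*} (s : CSS E U) (B : Set E) : CSS E U where
  f := s.f
  A := B

/-- Supremum of a family of central soft sets. -/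
noncomputable def cssSup {E U ι : Type*} (F : ι → CSS E U) : CSS E U where
  f := fun e =>
    if {i : ι | e ∈ (F i).A}.Nonempty then ⋃ i ∈ {i : ι | e ∈ (F i).A}, (F i).f e
    else ⋃ i, (F i).f e
  A := ⋃ i, (F i).A

/-- On `t.A \ s.A` the union takes the value of `t`, so no comparison of `f`s is needed there. -/
theorem cssLE_iff {E U : Type*} {s t : CSS E U} :
    cssLE s t ↔ s.A ⊆ t.A ∧ ∀ e, e ∈ s.A ∨ e ∉ t.A → s.f e ⊆ t.f e := by
  obtain ⟨f, A⟩ := s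
  obtain ⟨g, B⟩ := t
  simp only [cssLE, cssUnion, CSS.mk.injEq, Set.union_eq_right, funext_iff, and_comm (a := ∀ _, _)]
  refine and_congr_right fun hAB => forall_congr' fun e => ?_
  by_cases hA : e ∈ A
  · simp [hA, hAB hA]
  · by_cases hB : e ∈ B <;> simp [hA, hB]

theorem f_subset_cssSup_f {E U ι : Type*} (F : ι → CSS E U) {j : ι} {e : E}
    (he : e ∈ (F j).A ∨ e ∉ (cssSup F).A) : (F j).f e ⊆ (cssSup F).f e := by
  rcases he with hj | hnone
  · have hne : {i : ι | e ∈ (F i).A}.Nonempty := ⟨j, hj⟩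
    simp only [cssSup, if_pos hne]
    exact Set.subset_biUnion_of_mem (u := fun i => (F i).f e) hj
  · have hemp : ¬ {i : ι | e ∈ (F i).A}.Nonempty := fun ⟨i, hi⟩ =>
      hnone (Set.mem_iUnion.2 ⟨i, hi⟩)
    simp only [cssSup, if_neg hemp]
    exact Set.subset_iUnion (fun i => (F i).f e) j

theorem stmt14 {E U ι : Type*} (F : ι → CSS E U) (j : ι) :
    cssLE (F j) (cssSup F) :=
  cssLE_iff.2 ⟨Set.subset_iUnion (fun i => (F i).A) j, fun _ he => f_subset_cssSup_f F he⟩
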